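/- arXiv:math-ph/0408015 — 4 statements merged into one kernel-verified Lean document; each statement's English description precedes it below -/
import Mathlib

section
/- Let d ≥ 1 and let A and B be complex hermitian d×d matrices with B positive semidefinite. Then for every z ≥ 0 the second derivative of φ^{A,B}(z) = tr(exp(A − zB)) satisfies (d²/dz²) tr(exp(A − zB)) = tr( (∫_0^1 exp(−s(A − zB))·B·exp(s(A − zB))·B ds) · exp(A − zB) ). -/
/-!
Duhamel's formula `exp X - exp Y = ∫₀¹ exp (s X) (X - Y) exp ((1 - s) Y) ds`, applied to
`X = A - w B` and `Y = A - z B`, shows that `w ↦ exp (A - w B)` has derivative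
`-∫₀¹ exp (s M) B exp ((1 - s) M) ds` at `z`, where `M = A - z B`. Under a tracial functional `τ`
the integrand collapses to `τ (B exp M)`, so the first derivative is `-τ (B exp (A - w B))`.
Differentiating once more with the same formula and moving `exp (-s M)` around cyclically gives
the second derivative. Matrices are treated as a Banach algebra via the `ℓ∞` operator norm; the
matrix exponential does not depend on that choice.
-/

open Matrix NormedSpace intervalIntegral
open scoped ComplexOrder

theorem hasDerivAt_of_eq_add_sub_smul {𝕜 E : Type*} [NontriviallyNormedField 𝕜]
    [NormedAddCommGroup E] [NormedSpace 𝕜 E] {f Φ : 𝕜 → E} {z : 𝕜}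
    (h : ∀ w, f w = f z + (w - z) • Φ w) (hΦ : ContinuousAt Φ z) : HasDerivAt f (Φ z) z := by
  rw [hasDerivAt_iff_tendsto_slope]
  refine (hΦ.tendsto.mono_left nhdsWithin_le_nhds).congr' ?_
  filter_upwards [self_mem_nhdsWithin] with w hw
  rw [slope_def_module, h w, add_sub_cancel_left, smul_smul,
    inv_mul_cancel₀ (sub_ne_zero.2 hw), one_smul]

section BanachAlgebra

variable {𝔸 : Type*} [NormedRing 𝔸] [NormedAlgebra ℝ 𝔸] [NormedAlgebra ℚ 𝔸] [CompleteSpace 𝔸]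

theorem exp_smul_mul_exp_smul (M : 𝔸) (a b : ℝ) :
    exp (a • M) * exp (b • M) = exp ((a + b) • M) := by
  rw [add_smul, NormedSpace.exp_add_of_commute ((Commute.refl M).smul_left a |>.smul_right b)]

theorem exp_sub_exp_eq_intervalIntegral (X Y : 𝔸) :
    exp X - exp Y = ∫ s in (0:ℝ)..1, exp (s • X) * (X - Y) * exp ((1 - s) • Y) := by
  have hderiv (s : ℝ) : HasDerivAt (fun t : ℝ => exp (t • X) * exp ((1 - t) • Y))
      (exp (s • X) * (X - Y) * exp ((1 - s) • Y)) s := by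
    have hY : HasDerivAt (fun t : ℝ => exp ((1 - t) • Y)) (-(Y * exp ((1 - s) • Y))) s := by
      simpa [Function.comp_def] using
        (hasDerivAt_exp_smul_const' Y (1 - s)).scomp s ((hasDerivAt_id s).const_sub 1)
    refine ((hasDerivAt_exp_smul_const X s).mul hY).congr_deriv ?_
    rw [mul_neg, ← sub_eq_add_neg, ← mul_assoc, ← sub_mul, ← mul_sub]
  rw [integral_eq_sub_of_hasDerivAt (fun s _ => hderiv s)
    (Continuous.intervalIntegrable (by fun_prop) _ _)]
  simp

theorem hasDerivAt_exp_sub_smul (A B : 𝔸) (z : ℝ) :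
    HasDerivAt (fun w : ℝ => exp (A - w • B))
      (-∫ s in (0:ℝ)..1, exp (s • (A - z • B)) * B * exp ((1 - s) • (A - z • B))) z := by
  refine hasDerivAt_of_eq_add_sub_smul (Φ := fun w => -∫ s in (0:ℝ)..1,
      exp (s • (A - w • B)) * B * exp ((1 - s) • (A - z • B))) (fun w => ?_) ?_
  · have hdiff : (A - w • B) - (A - z • B) = -((w - z) • B) := by rw [sub_smul]; abel
    rw [← sub_eq_iff_eq_add', exp_sub_exp_eq_intervalIntegral, hdiff, smul_neg, ← integral_smul,
      ← integral_neg]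
    congr 1 with s
    rw [mul_neg, neg_mul, mul_smul_comm, smul_mul_assoc]
  · exact (continuous_parametric_intervalIntegral_of_continuous' (by fun_prop) 0 1).neg.continuousAt

section TraceFunctional

variable {E : Type*} [NormedAddCommGroup E] [NormedSpace ℝ E] [CompleteSpace E]
    (τ : 𝔸 →L[ℝ] E)

theorem hasDerivAt_map_exp_sub_smul_of_tracial (hτ : ∀ x y, τ (x * y) = τ (y * x)) (A B : 𝔸)
    (z : ℝ) : HasDerivAt (fun w : ℝ => τ (exp (A - w • B))) (-τ (B * exp (A - z • B))) z := by
  have hpath := hasDerivAt_exp_sub_smul A B z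
  set M := A - z • B
  have hcyclic (s : ℝ) : τ (exp (s • M) * B * exp ((1 - s) • M)) = τ (B * exp M) := by
    rw [mul_assoc, hτ, mul_assoc, exp_smul_mul_exp_smul, sub_add_cancel, one_smul]
  refine (τ.hasFDerivAt.comp_hasDerivAt z hpath).congr_deriv ?_
  rw [map_neg,
    ← τ.intervalIntegral_comp_comm (Continuous.intervalIntegrable (by fun_prop) _ _)]
  simp [hcyclic]

theorem deriv_deriv_map_exp_sub_smul_of_tracial (hτ : ∀ x y, τ (x * y) = τ (y * x)) (A B : 𝔸)
    (z : ℝ) :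
    deriv (deriv fun w : ℝ => τ (exp (A - w • B))) z =
      τ ((∫ s in (0:ℝ)..1, exp (-(s • (A - z • B))) * B * exp (s • (A - z • B)) * B) *
        exp (A - z • B)) := by
  have hpath := hasDerivAt_exp_sub_smul A B z
  set M := A - z • B
  have hcyclic (s : ℝ) : τ (B * (exp (s • M) * B * exp ((1 - s) • M))) =
      τ (exp (-(s • M)) * B * exp (s • M) * B * exp M) := by
    have hexp : exp M * exp (-(s • M)) = exp ((1 - s) • M) := by
      simpa [sub_eq_add_neg] using exp_smul_mul_exp_smul M 1 (-s)
    simp only [mul_assoc]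
    rw [hτ (exp _)]
    simp only [mul_assoc, hexp]
  have hfirst : deriv (fun w : ℝ => τ (exp (A - w • B))) = fun w => -τ (B * exp (A - w • B)) :=
    funext fun w => (hasDerivAt_map_exp_sub_smul_of_tracial τ hτ A B w).deriv
  rw [hfirst]
  refine (τ.hasFDerivAt.comp_hasDerivAt z (hpath.const_mul B)).neg.deriv.trans ?_
  have hleft := (τ.comp (ContinuousLinearMap.mul ℝ 𝔸 B)).intervalIntegral_comp_comm
    (Continuous.intervalIntegrable (μ := MeasureTheory.volume)
      (by fun_prop : Continuous fun s : ℝ => exp (s • M) * B * exp ((1 - s) • M)) 0 1)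
  have hright := (τ.comp ((ContinuousLinearMap.mul ℝ 𝔸).flip (exp M))).intervalIntegral_comp_comm
    (Continuous.intervalIntegrable (μ := MeasureTheory.volume)
      (by fun_prop : Continuous fun s : ℝ => exp (-(s • M)) * B * exp (s • M) * B) 0 1)
  simp only [ContinuousLinearMap.comp_apply, ContinuousLinearMap.mul_apply',
    ContinuousLinearMap.flip_apply] at hleft hright
  rw [mul_neg, map_neg, neg_neg, ← hleft, ← hright]
  exact integral_congr fun s _ => hcyclic s

end TraceFunctional

end BanachAlgebra

theorem Matrix.deriv_deriv_trace_exp_sub_smul {𝕜 n : Type*} [RCLike 𝕜] [Fintype n]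
    [DecidableEq n] (A B : Matrix n n 𝕜) (z : ℝ) :
    deriv (deriv fun w : ℝ => (exp (A - w • B)).trace) z =
      ((of fun i j => ∫ s in (0:ℝ)..1,
          (exp (-(s • (A - z • B))) * B * exp (s • (A - z • B)) * B) i j) *
        exp (A - z • B)).trace := by
  let _ : NormedRing (Matrix n n 𝕜) := Matrix.linftyOpNormedRing
  let _ : NormedAlgebra ℝ (Matrix n n 𝕜) := Matrix.linftyOpNormedAlgebra
  let _ : NormedAlgebra ℚ (Matrix n n 𝕜) := Matrix.linftyOpNormedAlgebra
  have hentries : (of fun i j => ∫ s in (0:ℝ)..1,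
      (exp (-(s • (A - z • B))) * B * exp (s • (A - z • B)) * B) i j) =
      ∫ s in (0:ℝ)..1, exp (-(s • (A - z • B))) * B * exp (s • (A - z • B)) * B := by
    have hF : Continuous fun s : ℝ =>
        exp (-(s • (A - z • B))) * B * exp (s • (A - z • B)) * B := by
      fun_prop
    ext i j
    exact (entryLinearMap ℝ 𝕜 i j).toContinuousLinearMap.intervalIntegral_comp_comm
      (hF.intervalIntegrable 0 1)
  rw [hentries]
  exact deriv_deriv_map_exp_sub_smul_of_tracial (traceLinearMap n ℝ 𝕜).toContinuousLinearMap
    trace_mul_comm A B z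

theorem bmv_second_deriv_trace_exp_general (d : ℕ)
    (A B : Matrix (Fin d) (Fin d) ℂ) :
    ∀ z : ℝ, 0 ≤ z →
      deriv (deriv (fun z : ℝ => (exp (A - (z : ℂ) • B)).trace)) z
        = ((Matrix.of fun i j =>
            ∫ s in (0:ℝ)..1,
              ((exp (-((s : ℂ) • (A - (z : ℂ) • B))) * B *
                exp ((s : ℂ) • (A - (z : ℂ) • B)) * B) i j)) *
            exp (A - (z : ℂ) • B)).trace := by
  intro z _
  simp only [Complex.coe_smul]
  exact Matrix.deriv_deriv_trace_exp_sub_smul A B z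

theorem bmv_second_deriv_trace_exp (d : ℕ) (hd : 1 ≤ d)
    (A B : Matrix (Fin d) (Fin d) ℂ)
    (hA : A.IsHermitian) (hB : B.PosSemidef) :
    ∀ z : ℝ, 0 ≤ z →
      deriv (deriv (fun z : ℝ => (exp (A - (z : ℂ) • B)).trace)) z
        = ((Matrix.of fun i j =>
            ∫ s in (0:ℝ)..1,
              ((exp (-((s : ℂ) • (A - (z : ℂ) • B))) * B *
                exp ((s : ℂ) • (A - (z : ℂ) • B)) * B) i j)) *
            exp (A - (z : ℂ) • B)).trace :=
  bmv_second_deriv_trace_exp_general d A B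
end

section
/- Let d ≥ 1 and let A and B be complex hermitian d×d matrices with B positive semidefinite. Then for every real z ≥ 0 the second derivative of z ↦ tr(exp(A − zB)) is nonnegative: (d²/dz²) tr(exp(A − zB)) ≥ 0. -/
/-!
In a Banach algebra, differentiating the exponential series termwise shows that
`t ↦ exp (x + t • y)` has derivative `expDeriv (x + t • y) y`, where
`expDeriv x y = ∑ₘ (m!)⁻¹ ∑_{i<m} x^(m-1-i) y x^i`. Taking traces and using cyclicity,
`φ'(z) = -tr (B exp (A - zB))` and `φ''(z) = tr (B · expDeriv (A - zB) B)`. Conjugating by a unitary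
`U` that diagonalises `A - zB`, with eigenvalues `λ_p`, and writing `C = U⋆ B U`, the entries of
`expDeriv` become divided differences of `exp`, so that
`φ''(z) = ∑_{p,q} |C_pq|² (exp λ_p - exp λ_q) / (λ_p - λ_q)` (read as `exp λ_p` when
`λ_p = λ_q`). Every term is nonnegative because `exp` is increasing.
-/

open Matrix NormedSpace
open scoped ComplexOrder

open Finset
open scoped Nat

section ExpDeriv

variable {𝔸 : Type*}

section Ring

variable [Ring 𝔸] [Algebra ℝ 𝔸]

noncomputable def expDerivTerm (x y : 𝔸) (m : ℕ) : 𝔸 :=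
  (m !⁻¹ : ℝ) • ∑ i ∈ range m, x ^ (m - 1 - i) * y * x ^ i

theorem expDerivTerm_conj {u v : 𝔸} (huv : u * v = 1) (hvu : v * u = 1) (x y : 𝔸) (m : ℕ) :
    expDerivTerm (u * x * v) (u * y * v) m = u * expDerivTerm x y m * v := by
  have hpow : ∀ k : ℕ, (u * x * v) ^ k = u * x ^ k * v := by
    intro k
    induction k with
    | zero => simp [huv]
    | succ k ih =>
      rw [pow_succ, ih, pow_succ]
      simp only [mul_assoc, ← mul_assoc v u, hvu, one_mul]
  simp only [expDerivTerm, hpow, mul_smul_comm, smul_mul_assoc, mul_sum, sum_mul]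
  congr 1
  refine sum_congr rfl fun i _ => ?_
  simp only [mul_assoc, ← mul_assoc v u, hvu, one_mul]

variable [TopologicalSpace 𝔸]

noncomputable def expDeriv (x y : 𝔸) : 𝔸 :=
  ∑' m, expDerivTerm x y m

theorem expDeriv_conj [IsTopologicalRing 𝔸] [T2Space 𝔸] {u v : 𝔸} (huv : u * v = 1)
    (hvu : v * u = 1) (x y : 𝔸) :
    expDeriv (u * x * v) (u * y * v) = u * expDeriv x y * v := by
  simp only [expDeriv, expDerivTerm_conj huv hvu]
  by_cases hs : Summable (expDerivTerm x y)
  · rw [(hs.mul_left u).tsum_mul_right, hs.tsum_mul_left]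
  · have hs' : ¬Summable fun m => u * expDerivTerm x y m * v := fun h => hs <| by
      simpa [mul_assoc, hvu, ← mul_assoc v u] using (h.mul_left v).mul_right u
    rw [tsum_eq_zero_of_not_summable hs, tsum_eq_zero_of_not_summable hs', mul_zero, zero_mul]

end Ring

section Normed

variable [NormedRing 𝔸] [NormedAlgebra ℝ 𝔸]

theorem hasDerivAt_expSeries_term_add_smul (x y : 𝔸) (m : ℕ) (t : ℝ) :
    HasDerivAt (fun s : ℝ => (m !⁻¹ : ℝ) • (x + s • y) ^ m) (expDerivTerm (x + t • y) y m) t := by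
  have hline : HasDerivAt (fun s : ℝ => x + s • y) y t := by
    simpa using ((hasDerivAt_id t).smul_const y).const_add x
  have h := (hline.fun_pow' m).const_smul (m !⁻¹ : ℝ)
  simp only [Nat.pred_eq_sub_one] at h
  exact h

theorem norm_expDerivTerm_le [NormOneClass 𝔸] {x : 𝔸} {r : ℝ} (hx : ‖x‖ ≤ r) (y : 𝔸) (m : ℕ) :
    ‖expDerivTerm x y m‖ ≤ ‖y‖ * (r ^ (m - 1) / (m - 1)!) := by
  have hr : 0 ≤ r := (norm_nonneg x).trans hx
  have hterm : ∀ i ∈ range m, ‖x ^ (m - 1 - i) * y * x ^ i‖ ≤ ‖y‖ * r ^ (m - 1) := by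
    intro i hi
    have hi' : i ≤ m - 1 := by rw [mem_range] at hi; omega
    calc ‖x ^ (m - 1 - i) * y * x ^ i‖ ≤ ‖x‖ ^ (m - 1 - i) * ‖y‖ * ‖x‖ ^ i := by
          refine (norm_mul_le _ _).trans ?_
          gcongr
          · exact (norm_mul_le _ _).trans (by gcongr; exact norm_pow_le _ _)
          · exact norm_pow_le _ _
      _ ≤ r ^ (m - 1 - i) * ‖y‖ * r ^ i := by gcongr
      _ = ‖y‖ * r ^ (m - 1) := by rw [mul_right_comm, ← pow_add, Nat.sub_add_cancel hi']; ring
  have hfact : (m !⁻¹ : ℝ) * m ≤ ((m - 1)! : ℝ)⁻¹ := by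
    rcases m with _ | m
    · simp
    · refine le_of_eq ?_
      rw [Nat.factorial_succ, Nat.add_sub_cancel]
      push_cast
      field_simp
  calc ‖expDerivTerm x y m‖ ≤ (m !⁻¹ : ℝ) * ∑ i ∈ range m, ‖x ^ (m - 1 - i) * y * x ^ i‖ := by
        rw [expDerivTerm, norm_smul, Real.norm_of_nonneg (by positivity)]
        gcongr
        exact norm_sum_le _ _
    _ ≤ (m !⁻¹ : ℝ) * m * (‖y‖ * r ^ (m - 1)) := by
        rw [mul_assoc]; gcongr; simpa using sum_le_sum hterm
    _ ≤ ((m - 1)! : ℝ)⁻¹ * (‖y‖ * r ^ (m - 1)) := by gcongr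
    _ = ‖y‖ * (r ^ (m - 1) / (m - 1)!) := by ring

theorem summable_pow_pred_div_factorial_pred (r : ℝ) :
    Summable fun m : ℕ => r ^ (m - 1) / (m - 1)! :=
  (summable_nat_add_iff 1).mp <| by simpa using Real.summable_pow_div_factorial r

variable [CompleteSpace 𝔸]

theorem summable_expDerivTerm [NormOneClass 𝔸] (x y : 𝔸) : Summable (expDerivTerm x y) :=
  .of_norm_bounded ((summable_pow_pred_div_factorial_pred ‖x‖).mul_left ‖y‖)
    (norm_expDerivTerm_le le_rfl y)

theorem hasDerivAt_exp_add_smul [NormOneClass 𝔸] (x y : 𝔸) (t : ℝ) :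
    HasDerivAt (fun s : ℝ => exp (x + s • y)) (expDeriv (x + t • y) y) t := by
  simp only [exp_eq_tsum ℝ]
  have hbound : ∀ s ∈ Metric.ball t 1, ‖x + s • y‖ ≤ ‖x‖ + (|t| + 1) * ‖y‖ := by
    intro s hs
    rw [Metric.mem_ball, Real.dist_eq] at hs
    have hs' : |s| ≤ |t| + 1 := by linarith [abs_sub_abs_le_abs_sub s t]
    calc ‖x + s • y‖ ≤ ‖x‖ + |s| * ‖y‖ := by
          simpa [norm_smul] using norm_add_le x (s • y)
      _ ≤ ‖x‖ + (|t| + 1) * ‖y‖ := by gcongr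
  exact hasDerivAt_tsum_of_isPreconnected
    ((summable_pow_pred_div_factorial_pred (‖x‖ + (|t| + 1) * ‖y‖)).mul_left ‖y‖)
    Metric.isOpen_ball (convex_ball t 1).isPreconnected
    (fun m s _ => hasDerivAt_expSeries_term_add_smul x y m s)
    (fun m s hs => norm_expDerivTerm_le (hbound s hs) y m)
    (Metric.mem_ball_self one_pos) (expSeries_summable' (x + t • y)) (Metric.mem_ball_self one_pos)

theorem exp_series_deriv_hasSum_exp (x : 𝔸) :
    HasSum (fun m : ℕ => (m !⁻¹ : ℝ) • ((m : ℝ) • x ^ (m - 1))) (exp x) := by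
  have hshift : (fun m : ℕ => ((m + 1)! ⁻¹ : ℝ) • (((m + 1 : ℕ) : ℝ) • x ^ (m + 1 - 1)))
      = fun m => (m !⁻¹ : ℝ) • x ^ m := by
    funext m
    rw [smul_smul, Nat.add_sub_cancel, Nat.factorial_succ]
    congr 1
    push_cast
    field_simp
  refine (hasSum_nat_add_iff' 1).mp ?_
  rw [hshift]
  simpa using exp_series_hasSum_exp' (𝕂 := ℝ) x

end Normed

end ExpDeriv

theorem hasSum_dslope_exp (a b : ℝ) :
    HasSum (fun m : ℕ => (m !⁻¹ : ℝ) * ∑ i ∈ range m, a ^ (m - 1 - i) * b ^ i)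
      (dslope Real.exp a b) := by
  rcases eq_or_ne b a with rfl | hba
  · have hdiag : ∀ m : ℕ, ∑ i ∈ range m, b ^ (m - 1 - i) * b ^ i = m * b ^ (m - 1) := by
      intro m
      rw [sum_congr rfl fun i hi => by
        rw [← pow_add, Nat.sub_add_cancel (by rw [mem_range] at hi; omega)]]
      simp
    rw [dslope_same, Real.deriv_exp, Real.exp_eq_exp_ℝ]
    simpa [hdiag] using exp_series_deriv_hasSum_exp b
  · have hgeom : ∀ m : ℕ, (∑ i ∈ range m, a ^ (m - 1 - i) * b ^ i) * (b - a) = b ^ m - a ^ m := by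
      intro m
      rw [← geom_sum₂_mul]
      exact congrArg (· * (b - a)) (sum_congr rfl fun i _ => mul_comm _ _)
    have hexp : HasSum (fun m : ℕ => b ^ m / (m ! : ℝ) - a ^ m / (m ! : ℝ))
        (Real.exp b - Real.exp a) := by
      simp only [Real.exp_eq_exp_ℝ]
      exact (expSeries_div_hasSum_exp b).sub (expSeries_div_hasSum_exp a)
    rw [dslope_of_ne _ hba, slope_def_field]
    refine (hexp.div_const (b - a)).congr_fun fun m => ?_
    rw [eq_div_iff (sub_ne_zero.mpr hba), mul_assoc, hgeom]
    ring

theorem dslope_exp_nonneg (a b : ℝ) : 0 ≤ dslope Real.exp a b := by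
  rcases eq_or_ne b a with rfl | hba
  · rw [dslope_same, Real.deriv_exp]
    exact (Real.exp_pos b).le
  · rw [dslope_of_ne _ hba]
    exact (Real.exp_monotone.monotoneOn Set.univ).slope_nonneg (Set.mem_univ _) (Set.mem_univ _)

theorem HasSum.matrix_trace {ι n R : Type*} [Fintype n] [AddCommMonoid R] [TopologicalSpace R]
    [ContinuousAdd R] {f : ι → Matrix n n R} {a : Matrix n n R} (hf : HasSum f a) :
    HasSum (fun i => (f i).trace) a.trace :=
  hasSum_sum fun p _ => Pi.hasSum.mp hf.matrix_diag p

section Matrix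

variable {n 𝕜 : Type*} [Fintype n] [DecidableEq n] [RCLike 𝕜]

theorem hasSum_expDerivTerm_diagonal (d : n → ℝ) (C : Matrix n n 𝕜) :
    HasSum (expDerivTerm (diagonal fun p => (d p : 𝕜)) C)
      (of fun p q => C p q * ((dslope Real.exp (d p) (d q) : ℝ) : 𝕜)) := by
  refine Pi.hasSum.mpr fun p => Pi.hasSum.mpr fun q => ?_
  refine (((RCLike.ofRealCLM (K := 𝕜)).hasSum (hasSum_dslope_exp (d p) (d q))).mul_left
    (C p q)).congr_fun fun m => ?_
  simp only [expDerivTerm, diagonal_pow, Matrix.smul_apply, Matrix.sum_apply, diagonal_mul,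
    mul_diagonal, Pi.pow_apply, RCLike.ofRealCLM_apply]
  push_cast
  rw [mul_sum, mul_sum, smul_sum]
  refine sum_congr rfl fun i _ => ?_
  rw [RCLike.real_smul_eq_coe_smul (K := 𝕜), smul_eq_mul]
  push_cast
  ring

theorem trace_mul_expDeriv_nonneg {X B : Matrix n n 𝕜} (hX : X.IsHermitian) (hB : B.IsHermitian) :
    0 ≤ (B * expDeriv X B).trace := by
  obtain ⟨U, hUU, hUU', d, rfl⟩ : ∃ U : Matrix n n 𝕜, U * star U = 1 ∧ star U * U = 1 ∧
      ∃ d : n → ℝ, X = U * diagonal (fun p => (d p : 𝕜)) * star U :=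
    ⟨_, Unitary.coe_mul_star_self _, Unitary.coe_star_mul_self _, _, hX.spectral_theorem⟩
  have hB' : U * (star U * B * U) * star U = B := by
    rw [← mul_assoc, ← mul_assoc, hUU, one_mul, mul_assoc, hUU, mul_one]
  have hconj := expDeriv_conj hUU hUU' (diagonal fun p => (d p : 𝕜)) (star U * B * U)
  rw [hB'] at hconj
  have htrace : (B * expDeriv (U * diagonal (fun p => (d p : 𝕜)) * star U) B).trace
      = (star U * B * U * expDeriv (diagonal fun p => (d p : 𝕜)) (star U * B * U)).trace := by
    rw [hconj, ← mul_assoc, ← mul_assoc, trace_mul_cycle, ← mul_assoc]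
  have hC : (star U * B * U).IsHermitian := isHermitian_conjTranspose_mul_mul U hB
  rw [htrace, expDeriv, (hasSum_expDerivTerm_diagonal _ _).tsum_eq, trace]
  refine sum_nonneg fun p _ => ?_
  rw [diag_apply, mul_apply]
  refine sum_nonneg fun q _ => ?_
  rw [of_apply, ← hC.apply q p, ← mul_assoc, RCLike.star_def, RCLike.mul_conj,
    ← RCLike.ofReal_pow, ← RCLike.ofReal_mul]
  exact RCLike.ofReal_nonneg.mpr (mul_nonneg (sq_nonneg _) (dslope_exp_nonneg _ _))

theorem trace_expDeriv (X Y : Matrix n n 𝕜) : (expDeriv X Y).trace = (Y * exp X).trace := by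
  rcases isEmpty_or_nonempty n with hn | hn
  · simp [Matrix.trace]
  have hterm : ∀ m : ℕ, (expDerivTerm X Y m).trace
      = (Y * ((m !⁻¹ : ℝ) • ((m : ℝ) • X ^ (m - 1)))).trace := by
    intro m
    have hcyc : ∀ i ∈ range m, (X ^ (m - 1 - i) * Y * X ^ i).trace = (Y * X ^ (m - 1)).trace := by
      intro i hi
      rw [trace_mul_cycle, ← pow_add, Nat.add_sub_cancel' (by rw [mem_range] at hi; omega),
        trace_mul_comm]
    rw [expDerivTerm, trace_smul, trace_sum, sum_congr rfl hcyc, mul_smul_comm, mul_smul_comm,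
      trace_smul, trace_smul, sum_const, card_range, nsmul_eq_mul]
    simp only [RCLike.real_smul_eq_coe_smul (K := 𝕜), smul_eq_mul]
    push_cast
    ring
  open scoped Matrix.Norms.Operator in
  refine (summable_expDerivTerm X Y).hasSum.matrix_trace.unique ?_
  simp only [hterm]
  open scoped Matrix.Norms.Operator in
  exact ((exp_series_deriv_hasSum_exp X).mul_left Y).matrix_trace

theorem hasDerivAt_trace_mul_exp_add_smul (X Y Z : Matrix n n 𝕜) (t : ℝ) :
    HasDerivAt (fun s : ℝ => (Z * exp (X + s • Y)).trace) (Z * expDeriv (X + t • Y) Y).trace t := by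
  rcases isEmpty_or_nonempty n with hn | hn
  · simpa [Matrix.trace] using hasDerivAt_const t (0 : 𝕜)
  open scoped Matrix.Norms.Operator in
  exact (LinearMap.toContinuousLinearMap (traceLinearMap n ℝ 𝕜)).hasFDerivAt.comp_hasDerivAt t
    ((hasDerivAt_exp_add_smul X Y t).const_mul Z)

theorem hasDerivAt_trace_exp_add_smul (X Y : Matrix n n 𝕜) (t : ℝ) :
    HasDerivAt (fun s : ℝ => (exp (X + s • Y)).trace) (Y * exp (X + t • Y)).trace t := by
  simpa [trace_expDeriv] using hasDerivAt_trace_mul_exp_add_smul X Y 1 t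

end Matrix

theorem bmv_second_deriv_nonneg_general (d : ℕ)
    (A B : Matrix (Fin d) (Fin d) ℂ)
    (hA : A.IsHermitian) (hB : B.PosSemidef) :
    ∀ z : ℝ, 0 ≤ z →
      ((deriv (deriv (fun z : ℝ => (exp (A - (z : ℂ) • B)).trace)) z).im = 0 ∧
        0 ≤ (deriv (deriv (fun z : ℝ => (exp (A - (z : ℂ) • B)).trace)) z).re) := by
  intro z _
  have hline : (fun s : ℝ => (exp (A - (s : ℂ) • B)).trace)
      = fun s : ℝ => (exp (A + s • -B)).trace := by
    funext s
    rw [smul_neg, ← sub_eq_add_neg, RCLike.real_smul_eq_coe_smul (K := ℂ)]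
    rfl
  have hderiv : deriv (fun s : ℝ => (exp (A + s • -B)).trace)
      = fun s => (-B * exp (A + s • -B)).trace :=
    funext fun s => (hasDerivAt_trace_exp_add_smul A (-B) s).deriv
  have hderiv2 := (hasDerivAt_trace_mul_exp_add_smul A (-B) (-B) z).deriv
  have hnonneg := trace_mul_expDeriv_nonneg (hA.add (hB.1.neg.smul (IsSelfAdjoint.all z))) hB.1.neg
  rw [hline, hderiv, hderiv2]
  exact ⟨(Complex.nonneg_iff.mp hnonneg).2.symm, (Complex.nonneg_iff.mp hnonneg).1⟩

theorem bmv_second_deriv_nonneg (d : ℕ) (hd : 1 ≤ d)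
    (A B : Matrix (Fin d) (Fin d) ℂ)
    (hA : A.IsHermitian) (hB : B.PosSemidef) :
    ∀ z : ℝ, 0 ≤ z →
      ((deriv (deriv (fun z : ℝ => (exp (A - (z : ℂ) • B)).trace)) z).im = 0 ∧
        0 ≤ (deriv (deriv (fun z : ℝ => (exp (A - (z : ℂ) • B)).trace)) z).re) :=
  bmv_second_deriv_nonneg_general d A B hA hB
end

section
/- Let k ≥ 0, m ≥ 0, r ≥ 0 and 0 ≤ j ≤ k be integers with j ≡ m (mod 2), and let C, D be real numbers with D ≠ 0. Set v = 2CD/(C² + D²). Then 2^j · Σ_{i=0}^{k−j} C(k−j, i) · ((2k+m−j−2i)/2)_r · C^{j+2i} · D^{2k−j−2i} = (C² + D²)^k · v^j · Σ_{ρ=0}^{r} (−1)^ρ · C(r,ρ) · ((2k+m−j)/2)_{r−ρ} · (k−j)(k−j−1)···(k−j−ρ+1) · (Cv/(2D))^ρ, where the falling-factorial factor (k−j)(k−j−1)···(k−j−ρ+1) is 1 for ρ = 0 and 0 whenever ρ > k−j. -/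
/-!
With `n = k - j`, `a = (2k + m - j)/2`, `x = C²`, `y = D²`, the left side is
`(2CD)^j ∑ᵢ C(n,i) (a - i)_r xⁱ y^(n-i)`. Chu–Vandermonde for rising factorials, together with
`(-i)_ρ = (-1)^ρ i(i-1)⋯(i-ρ+1)`, expands `(a - i)_r` as
`∑_ρ (-1)^ρ C(r,ρ) i(i-1)⋯(i-ρ+1) (a)_(r-ρ)`, and
`∑ᵢ C(n,i) i(i-1)⋯(i-ρ+1) xⁱ y^(n-i) = n(n-1)⋯(n-ρ+1) x^ρ (x+y)^(n-ρ)`. Since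
`(C² + D²)^k v^j = (2CD)^j (C² + D²)^n` and `Cv/(2D) = C²/(C² + D²)`, this is the right side.
-/

open Finset Polynomial

theorem ascPochhammer_eval_add {R : Type*} [CommSemiring R] (x y : R) (n : ℕ) :
    (ascPochhammer R n).eval (x + y) = ∑ ij ∈ antidiagonal n,
      n.choose ij.1 * ((ascPochhammer R ij.1).eval x * (ascPochhammer R ij.2).eval y) := by
  induction n with
  | zero => simp
  | succ n ih =>
    rw [ascPochhammer_succ_eval, ih, sum_mul, sum_antidiagonal_choose_succ_mul
      (fun i j => (ascPochhammer R i).eval x * (ascPochhammer R j).eval y), ← sum_add_distrib]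
    refine sum_congr rfl fun ij hij => ?_
    have hn : (n : R) = ij.1 + ij.2 := by rw [← mem_antidiagonal.1 hij]; push_cast; rfl
    rw [Nat.choose_symm_of_eq_add (mem_antidiagonal.1 hij).symm, ascPochhammer_succ_eval,
      ascPochhammer_succ_eval, hn]
    ring

theorem ascPochhammer_eval_neg_natCast {R : Type*} [Ring R] (i ρ : ℕ) :
    (ascPochhammer R ρ).eval (-(i : R)) = (-1) ^ ρ * i.descFactorial ρ := by
  rw [ascPochhammer_eval_neg_eq_descPochhammer, descPochhammer_eval_eq_descFactorial]

theorem ascPochhammer_eval_sub_natCast {R : Type*} [CommRing R] (a : R) (i r : ℕ) :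
    (ascPochhammer R r).eval (a - i) = ∑ ρ ∈ range (r + 1),
      (-1) ^ ρ * r.choose ρ * i.descFactorial ρ * (ascPochhammer R (r - ρ)).eval a := by
  rw [sub_eq_neg_add, ascPochhammer_eval_add, Nat.sum_antidiagonal_eq_sum_range_succ_mk]
  simp only [ascPochhammer_eval_neg_natCast]
  exact sum_congr rfl fun ρ _ => by ring

theorem Nat.choose_mul_descFactorial {n i ρ : ℕ} (h : ρ ≤ i) :
    n.choose i * i.descFactorial ρ = n.descFactorial ρ * (n - ρ).choose (i - ρ) := by
  rw [descFactorial_eq_factorial_mul_choose, descFactorial_eq_factorial_mul_choose,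
    mul_left_comm, choose_mul h, mul_assoc]

theorem sum_choose_mul_descFactorial_mul_pow {R : Type*} [CommSemiring R] (n ρ : ℕ) (x y : R) :
    ∑ i ∈ range (n + 1), n.choose i * i.descFactorial ρ * x ^ i * y ^ (n - i) =
      n.descFactorial ρ * x ^ ρ * (x + y) ^ (n - ρ) := by
  rcases lt_or_ge n ρ with h | h
  · rw [Nat.descFactorial_eq_zero_iff_lt.2 h]
    refine (sum_eq_zero fun i hi => ?_).trans (by simp)
    rw [Nat.descFactorial_eq_zero_iff_lt.2 (by grind)]
    simp
  · rw [show n + 1 = ρ + (n - ρ + 1) by omega, sum_range_add, add_pow, mul_sum]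
    rw [sum_eq_zero fun i hi => by simp [Nat.descFactorial_eq_zero_iff_lt.2 (mem_range.1 hi)]]
    refine (zero_add _).trans (sum_congr rfl fun l hl => ?_)
    rw [← Nat.cast_mul, Nat.choose_mul_descFactorial (by omega), Nat.add_sub_cancel_left,
      show n - (ρ + l) = n - ρ - l by omega]
    push_cast
    ring

theorem sum_choose_mul_ascPochhammer_sub_mul_pow {R : Type*} [CommRing R] (n r : ℕ) (a x y : R) :
    ∑ i ∈ range (n + 1), n.choose i * (ascPochhammer R r).eval (a - i) * x ^ i * y ^ (n - i) =
      ∑ ρ ∈ range (r + 1), (-1) ^ ρ * r.choose ρ * (ascPochhammer R (r - ρ)).eval a *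
        (n.descFactorial ρ * x ^ ρ * (x + y) ^ (n - ρ)) := by
  simp only [← sum_choose_mul_descFactorial_mul_pow, ascPochhammer_eval_sub_natCast, mul_sum,
    sum_mul]
  rw [sum_comm]
  exact sum_congr rfl fun ρ _ => sum_congr rfl fun i _ => by ring

theorem descFactorial_mul_div_pow_mul_pow {K : Type*} [Field K] {s : K} (hs : s ≠ 0)
    (n ρ : ℕ) (x : K) :
    s ^ n * (n.descFactorial ρ * (x / s) ^ ρ) = n.descFactorial ρ * x ^ ρ * s ^ (n - ρ) := by
  rcases lt_or_ge n ρ with h | h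
  · simp [Nat.descFactorial_eq_zero_iff_lt.2 h]
  · rw [← Nat.sub_add_cancel h, pow_add, Nat.add_sub_cancel, div_pow]
    field_simp

theorem hypergeometric_transform_general (k m r j : ℕ) (hj : j ≤ k)
    (C D : ℝ) (hD : D ≠ 0) (v : ℝ) (hv : v = 2 * C * D / (C ^ 2 + D ^ 2)) :
    2 ^ j * ∑ i ∈ Finset.range (k - j + 1),
        (Nat.choose (k - j) i : ℝ) *
          (ascPochhammer ℝ r).eval (((2 * k + m : ℝ) - j - 2 * i) / 2) *
          C ^ (j + 2 * i) * D ^ (2 * k - j - 2 * i)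
      = (C ^ 2 + D ^ 2) ^ k * v ^ j *
          ∑ ρ ∈ Finset.range (r + 1),
            (-1 : ℝ) ^ ρ * (Nat.choose r ρ : ℝ) *
              (ascPochhammer ℝ (r - ρ)).eval (((2 * k + m : ℝ) - j) / 2) *
              (Nat.descFactorial (k - j) ρ : ℝ) * (C * v / (2 * D)) ^ ρ := by
  set n := k - j
  set a : ℝ := ((2 * k + m : ℝ) - j) / 2
  have hS : C ^ 2 + D ^ 2 ≠ 0 := by positivity
  have hterm : ∀ i ∈ range (n + 1),
      2 ^ j * ((n.choose i : ℝ) * (ascPochhammer ℝ r).eval (((2 * k + m : ℝ) - j - 2 * i) / 2) *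
        C ^ (j + 2 * i) * D ^ (2 * k - j - 2 * i)) =
      (2 * C * D) ^ j * (n.choose i * (ascPochhammer ℝ r).eval (a - i) *
        (C ^ 2) ^ i * (D ^ 2) ^ (n - i)) := fun i hi => by
    rw [show 2 * k - j - 2 * i = j + 2 * (n - i) by grind,
      show ((2 * k + m : ℝ) - j - 2 * i) / 2 = a - i by ring]
    ring
  have hscale : (C ^ 2 + D ^ 2) ^ k * v ^ j = (2 * C * D) ^ j * (C ^ 2 + D ^ 2) ^ n := by
    rw [hv, ← Nat.sub_add_cancel hj, pow_add, div_pow]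
    field_simp
    exact mul_comm _ _
  have hratio : C * v / (2 * D) = C ^ 2 / (C ^ 2 + D ^ 2) := by
    rw [hv]
    field_simp
  rw [mul_sum, sum_congr rfl hterm, ← mul_sum, sum_choose_mul_ascPochhammer_sub_mul_pow, hscale,
    hratio, mul_assoc, mul_sum, mul_sum]
  refine sum_congr rfl fun ρ _ => ?_
  rw [← descFactorial_mul_div_pow_mul_pow hS]
  ring

theorem hypergeometric_transform (k m r j : ℕ) (hj : j ≤ k) (hpar : j % 2 = m % 2)
    (C D : ℝ) (hD : D ≠ 0) (v : ℝ) (hv : v = 2 * C * D / (C ^ 2 + D ^ 2)) :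
    2 ^ j * ∑ i ∈ Finset.range (k - j + 1),
        (Nat.choose (k - j) i : ℝ) *
          (ascPochhammer ℝ r).eval (((2 * k + m : ℝ) - j - 2 * i) / 2) *
          C ^ (j + 2 * i) * D ^ (2 * k - j - 2 * i)
      = (C ^ 2 + D ^ 2) ^ k * v ^ j *
          ∑ ρ ∈ Finset.range (r + 1),
            (-1 : ℝ) ^ ρ * (Nat.choose r ρ : ℝ) *
              (ascPochhammer ℝ (r - ρ)).eval (((2 * k + m : ℝ) - j) / 2) *
              (Nat.descFactorial (k - j) ρ : ℝ) * (C * v / (2 * D)) ^ ρ :=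
  hypergeometric_transform_general k m r j hj C D hD v hv
end

section
/- Let k ≥ 1 and r ≥ 1 be integers and let v, ξ be real numbers. Then A_r(k;v,ξ) = ∫_0^1 [ Σ_{ℓ=0}^{⌊k/2⌋} k!/(ℓ!·(ℓ+r−1)!·(k−2ℓ)!) · (1+sv)^{k−2ℓ} · ((1−v²)/2)^ℓ · ((1−s²)/2)^{ℓ+r−1} ] · e^{sξ} ds. -/
/-!
Write `r = w + 1`. The coefficient of `ξ^m / m!` in `bmvA` is a polynomial `S_{k,w}(m)` in `v`
(`bmvCoeff k w m v`), and the theorem is the moment identity `S_{k,w}(m) = ∫₀¹ P_{k,w}(s) s^m ds`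
for the bracketed polynomial `P_{k,w}` (`bmvDensity k w v`), summed against
`Σ_m (sξ)^m / m! = e^{sξ}` under the integral by dominated convergence.

Both sides of the moment identity satisfy
`X_{k+2,w}(m) = X_{k+1,w}(m) + v X_{k+1,w}(m+1) + (k+1)(1 - v²) X_{k,w+1}(m)`.
For the moments this is the three-term recurrence
`P_{k+2,w} = (1 + sv) P_{k+1,w} + (k+1)(1 - v²) P_{k,w+1}`; for the coefficients it follows from
Pascal's rule in `k` together with two contiguous relations between the Pochhammer quotients.
At `k = 0` both sides equal `1 / ((m+1)(m+3)⋯(m+2w+1))`: the moment by the Beta integral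
`∫₀¹ s^m (1 - s²)^w ds = 2^w w! / ((m+1)(m+3)⋯(m+2w+1))`, the coefficient by the duplication
formula `(x)_{2w+1} = x(x+2)⋯(x+2w) · (x+1)(x+3)⋯(x+2w-1)`. At `k = 1` both sides are
`X_{0,w}(m) + v X_{0,w}(m+1)`.
-/

open Finset

/-- `bmvA k r v ξ = A_r(k; v, ξ)`, the double series
`Σ_m Σ_{j=0}^k C(k,j) · 2^{k+r−1} · ((m−j+2)/2)_{k+r−1} / (m+1)_{k+2r−1} · v^j · ξ^m/m!`. -/
noncomputable def bmvA (k r : ℕ) (v ξ : ℝ) : ℝ :=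
  ∑' m : ℕ, ∑ j ∈ Finset.range (k + 1),
    (Nat.choose k j : ℝ) * 2 ^ (k + r - 1) *
      (ascPochhammer ℝ (k + r - 1)).eval (((m : ℝ) - j + 2) / 2) /
      (ascPochhammer ℝ (k + 2 * r - 1)).eval ((m : ℝ) + 1) *
      v ^ j * ξ ^ m / (Nat.factorial m : ℝ)

open Nat MeasureTheory

theorem ascPochhammer_succ_eval_left (n : ℕ) (x : ℝ) :
    (ascPochhammer ℝ (n + 1)).eval x = x * (ascPochhammer ℝ n).eval (x + 1) := by
  simp [ascPochhammer_succ_left, Polynomial.eval_comp]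

-- `y (y + 2) ⋯ (y + 2n - 2)`
noncomputable def risingStepTwo (y : ℝ) (n : ℕ) : ℝ :=
  2 ^ n * (ascPochhammer ℝ n).eval (y / 2)

theorem risingStepTwo_zero (y : ℝ) : risingStepTwo y 0 = 1 := by simp [risingStepTwo]

theorem risingStepTwo_succ (y : ℝ) (n : ℕ) :
    risingStepTwo y (n + 1) = risingStepTwo y n * (y + 2 * n) := by
  rw [risingStepTwo, risingStepTwo, ascPochhammer_succ_eval]; ring

theorem risingStepTwo_succ_left (y : ℝ) (n : ℕ) :
    risingStepTwo y (n + 1) = y * risingStepTwo (y + 2) n := by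
  rw [risingStepTwo, risingStepTwo, ascPochhammer_succ_eval_left, add_div, div_self two_ne_zero]
  ring

theorem risingStepTwo_pos {y : ℝ} (hy : 0 < y) (n : ℕ) : 0 < risingStepTwo y n :=
  mul_pos (by positivity) (ascPochhammer_pos n _ (by positivity))

theorem ascPochhammer_eval_two_mul_add_one (x : ℝ) (n : ℕ) :
    (ascPochhammer ℝ (2 * n + 1)).eval x = risingStepTwo x (n + 1) * risingStepTwo (x + 1) n := by
  induction n with
  | zero => simp [risingStepTwo_succ, risingStepTwo_zero]
  | succ n ih =>
    rw [show 2 * (n + 1) + 1 = 2 * n + 1 + 1 + 1 by ring, ascPochhammer_succ_eval,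
      ascPochhammer_succ_eval, ih, risingStepTwo_succ x (n + 1), risingStepTwo_succ (x + 1) n]
    push_cast; ring

theorem sum_range_choose_succ_mul_sub {R : Type*} [CommRing R] (n : ℕ) (g : ℕ → R) :
    ∑ i ∈ range (n + 2), ((n + 1).choose i : R) * ((n + 1 - i : R) * g i)
      = (n + 1) * ∑ i ∈ range (n + 1), (n.choose i : R) * g i := by
  rw [sum_range_succ, mul_sum]
  refine (add_eq_left.mpr (by push_cast; ring)).trans (sum_congr rfl fun i hi => ?_)
  have hi : i ≤ n + 1 := by have := mem_range.mp hi; omega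
  have := congrArg (Nat.cast (R := R)) (Nat.choose_mul_succ_eq n i)
  push_cast [Nat.cast_sub hi] at this
  linear_combination (-g i) * this

theorem sum_range_choose_succ_mul_self {R : Type*} [CommRing R] (n : ℕ) (g : ℕ → R) :
    ∑ i ∈ range (n + 2), ((n + 1).choose i : R) * (i * g i)
      = (n + 1) * ∑ i ∈ range (n + 1), (n.choose i : R) * g (i + 1) := by
  rw [sum_range_succ', mul_sum]
  simp only [Nat.cast_zero, zero_mul, mul_zero, add_zero]
  refine sum_congr rfl fun i _ => ?_
  have := congrArg (Nat.cast (R := R)) (Nat.add_one_mul_choose_eq n i)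
  push_cast at this ⊢
  linear_combination (-g (i + 1)) * this

theorem descFactorial_add_two_two_mul_add_one (k ℓ : ℕ) :
    (k + 2).descFactorial (2 * (ℓ + 1))
      = (k + 1).descFactorial (2 * (ℓ + 1))
        + 2 * (ℓ + 1) * (k + 1) * k.descFactorial (2 * ℓ) := by
  rw [mul_add_one, succ_descFactorial_succ, succ_descFactorial_succ, succ_descFactorial_succ,
    descFactorial_succ]
  rcases le_or_gt (2 * ℓ) k with h | h
  · obtain ⟨d, rfl⟩ := Nat.exists_eq_add_of_le h
    rw [Nat.add_sub_cancel_left]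
    ring
  · simp [descFactorial_of_lt h]

theorem integral_pow_mul_one_sub_sq_pow (m w : ℕ) :
    ∫ s in (0 : ℝ)..1, s ^ m * (1 - s ^ 2) ^ w
      = 2 ^ w * w ! / risingStepTwo (m + 1) (w + 1) := by
  induction w with
  | zero =>
    simp [risingStepTwo_succ, risingStepTwo_zero, integral_pow]
  | succ w ih =>
    -- `s^(m+1) (1 - s²)^(w+1)` vanishes at `0` and `1`, whence `(m + 2w + 3) I_(w+1) = 2(w+1) I_w`.
    have hderiv : ∀ s ∈ Set.uIcc (0 : ℝ) 1,
        HasDerivAt (fun s => s ^ (m + 1) * (1 - s ^ 2) ^ (w + 1))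
          ((m + 2 * w + 3) * (s ^ m * (1 - s ^ 2) ^ (w + 1))
            - 2 * (w + 1) * (s ^ m * (1 - s ^ 2) ^ w)) s := by
      intro s _
      refine ((hasDerivAt_pow (m + 1) s).mul
        (((hasDerivAt_pow 2 s).const_sub 1).fun_pow (w + 1))).congr_deriv ?_
      push_cast
      ring
    have hint (n : ℕ) : IntervalIntegrable (fun s : ℝ => s ^ m * (1 - s ^ 2) ^ n) volume 0 1 :=
      (by fun_prop : Continuous fun s : ℝ => s ^ m * (1 - s ^ 2) ^ n).intervalIntegrable 0 1
    have hftc := intervalIntegral.integral_eq_sub_of_hasDerivAt hderiv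
      (((hint _).const_mul _).sub ((hint _).const_mul _))
    rw [intervalIntegral.integral_sub ((hint _).const_mul _) ((hint _).const_mul _),
      intervalIntegral.integral_const_mul, intervalIntegral.integral_const_mul, ih] at hftc
    have hpos := (risingStepTwo_pos (by positivity : (0 : ℝ) < m + 1) (w + 1)).ne'
    have hm : (m : ℝ) + 2 * w + 3 ≠ 0 := by positivity
    rw [risingStepTwo_succ _ (w + 1), factorial_succ]
    norm_num at hftc
    push_cast
    field_simp at hftc ⊢
    linear_combination hftc

theorem hasSum_integral_mul_pow_mul_div_factorial {f : ℝ → ℝ}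
    (hf : IntervalIntegrable f volume 0 1) (ξ : ℝ) :
    HasSum (fun m : ℕ => (∫ s in (0 : ℝ)..1, f s * s ^ m) * ξ ^ m / m !)
      (∫ s in (0 : ℝ)..1, f s * Real.exp (s * ξ)) := by
  have hterm : ∀ m : ℕ, (∫ s in (0 : ℝ)..1, f s * s ^ m) * ξ ^ m / m !
      = ∫ s in (0 : ℝ)..1, f s * ((s * ξ) ^ m / m !) := fun m => by
    rw [← intervalIntegral.integral_mul_const, ← intervalIntegral.integral_div]
    congr 1 with s
    ring
  simp only [hterm]
  refine intervalIntegral.hasSum_integral_of_dominated_convergence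
    (fun m s => |f s| * (|ξ| ^ m / m !)) (fun m => ?_) (fun m => ?_)
    (ae_of_all _ fun s _ => (Real.summable_pow_div_factorial |ξ|).mul_left _) ?_
    (ae_of_all _ fun s _ => ?_)
  · exact hf.def'.aestronglyMeasurable.mul
      (by fun_prop : Continuous fun s : ℝ => (s * ξ) ^ m / m !).aestronglyMeasurable
  · refine ae_of_all _ fun s hs => ?_
    rw [Set.uIoc_of_le zero_le_one] at hs
    have hs' : |s| ≤ 1 := abs_le.mpr ⟨by linarith [hs.1], hs.2⟩
    rw [Real.norm_eq_abs, abs_mul, abs_div, abs_of_pos (by positivity : (0 : ℝ) < m !), abs_pow,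
      abs_mul]
    gcongr
    exact mul_le_of_le_one_left (abs_nonneg ξ) hs'
  · simpa only [tsum_mul_left] using hf.abs.mul_const _
  · have := (NormedSpace.expSeries_div_hasSum_exp (s * ξ)).mul_left (f s)
    rwa [← Real.exp_eq_exp_ℝ] at this

-- At `x = m`, `t = j` this is the Pochhammer quotient of the `(m, j)` summand of `bmvA k (w + 1)`;
-- `t` is real so that the contiguous relations below can shift it by `± 1`.
noncomputable def bmvTerm (k w : ℕ) (x t : ℝ) : ℝ :=
  risingStepTwo (x - t + 2) (k + w) / (ascPochhammer ℝ (k + 2 * w + 1)).eval (x + 1)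

theorem bmvTerm_add_two (k w : ℕ) {x : ℝ} (hx : 0 < x + 1) (t : ℝ) :
    bmvTerm (k + 2) w x t = bmvTerm (k + 1) w x t + (k + 1 - t) * bmvTerm k (w + 1) x t := by
  have hQ : (ascPochhammer ℝ (k + 2 * w + 2)).eval (x + 1) ≠ 0 :=
    (ascPochhammer_pos _ _ hx).ne'
  have hx' : x + 1 + (k + 2 * w + 2 : ℕ) ≠ 0 := by positivity
  simp only [bmvTerm]
  rw [show k + 2 + w = k + w + 1 + 1 by ring, show k + 1 + w = k + w + 1 by ring,
    show k + (w + 1) = k + w + 1 by ring, show k + 2 + 2 * w + 1 = k + 2 * w + 2 + 1 by ring,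
    show k + 1 + 2 * w + 1 = k + 2 * w + 2 by ring,
    show k + 2 * (w + 1) + 1 = k + 2 * w + 2 + 1 by ring, risingStepTwo_succ _ (k + w + 1),
    ascPochhammer_succ_eval]
  field_simp
  push_cast
  ring

theorem bmvTerm_add_two_add_one (k w : ℕ) {x : ℝ} (hx : 0 < x + 1) (t : ℝ) :
    bmvTerm (k + 2) w x (t + 1)
      = bmvTerm (k + 1) w (x + 1) t - t * bmvTerm k (w + 1) x (t - 1) := by
  have hQ : (ascPochhammer ℝ (k + 2 * w + 2)).eval (x + 1 + 1) ≠ 0 :=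
    (ascPochhammer_pos _ _ (by linarith)).ne'
  simp only [bmvTerm]
  rw [show k + 2 + w = k + w + 1 + 1 by ring, show k + 1 + w = k + w + 1 by ring,
    show k + (w + 1) = k + w + 1 by ring, show k + 2 + 2 * w + 1 = k + 2 * w + 2 + 1 by ring,
    show k + 1 + 2 * w + 1 = k + 2 * w + 2 by ring,
    show k + 2 * (w + 1) + 1 = k + 2 * w + 2 + 1 by ring, risingStepTwo_succ_left _ (k + w + 1),
    ascPochhammer_succ_eval_left, show x - (t + 1) + 2 + 2 = x + 1 - t + 2 by ring,
    show x - (t - 1) + 2 = x + 1 - t + 2 by ring]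
  field_simp
  ring

theorem bmvTerm_one_zero (w : ℕ) {x : ℝ} (hx : 0 < x + 1) :
    bmvTerm 1 w x 0 = bmvTerm 0 w x 0 := by
  have hQ := (ascPochhammer_pos (2 * w + 1) _ hx).ne'
  have hx' : x + 1 + (2 * w + 1 : ℕ) ≠ 0 := by positivity
  simp only [bmvTerm, zero_add, sub_zero]
  rw [show 1 + w = w + 1 by ring, show 1 + 2 * w + 1 = 2 * w + 1 + 1 by ring,
    risingStepTwo_succ, ascPochhammer_succ_eval]
  field_simp
  push_cast
  ring

theorem bmvTerm_one_one (w : ℕ) {x : ℝ} (hx : 0 < x + 1) :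
    bmvTerm 1 w x 1 = bmvTerm 0 w (x + 1) 0 := by
  have hQ := (ascPochhammer_pos (2 * w + 1) (x + 1 + 1) (by linarith)).ne'
  simp only [bmvTerm, zero_add, sub_zero]
  rw [show 1 + w = w + 1 by ring, show 1 + 2 * w + 1 = 2 * w + 1 + 1 by ring,
    risingStepTwo_succ_left, ascPochhammer_succ_eval_left,
    show x - 1 + 2 + 2 = x + 1 + 2 by ring, show x - 1 + 2 = x + 1 by ring]
  field_simp

noncomputable def bmvCoeff (k w : ℕ) (x v : ℝ) : ℝ :=
  ∑ j ∈ range (k + 1), (k.choose j : ℝ) * (bmvTerm k w x j * v ^ j)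

theorem bmvCoeff_add_two (k w : ℕ) {x : ℝ} (hx : 0 < x + 1) (v : ℝ) :
    bmvCoeff (k + 2) w x v = bmvCoeff (k + 1) w x v + v * bmvCoeff (k + 1) w (x + 1) v
      + (k + 1) * (1 - v ^ 2) * bmvCoeff k (w + 1) x v := by
  have hpascal := sum_choose_succ_mul (fun i _ => bmvTerm (k + 2) w x i * v ^ i) (k + 1)
  have hlow : ∑ i ∈ range (k + 2), ((k + 1).choose i : ℝ) * (bmvTerm (k + 2) w x i * v ^ i)
      = bmvCoeff (k + 1) w x v + (k + 1) * bmvCoeff k (w + 1) x v := by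
    simp only [bmvTerm_add_two k w hx, bmvCoeff, ← sum_range_choose_succ_mul_sub,
      ← sum_add_distrib]
    exact sum_congr rfl fun i _ => by ring
  have hhigh : ∑ i ∈ range (k + 2),
      ((k + 1).choose i : ℝ) * (bmvTerm (k + 2) w x (i + 1 : ℕ) * v ^ (i + 1))
      = v * bmvCoeff (k + 1) w (x + 1) v - (k + 1) * v ^ 2 * bmvCoeff k (w + 1) x v := by
    have hshift := sum_range_choose_succ_mul_self k
      (fun i => bmvTerm k (w + 1) x (i - 1) * v ^ (i + 1))
    simp only [Nat.cast_add, Nat.cast_one, add_sub_cancel_right] at hshift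
    calc _ = ∑ i ∈ range (k + 2),
            (v * ((k + 1).choose i * (bmvTerm (k + 1) w (x + 1) i * v ^ i))
              - ((k + 1).choose i * (i * (bmvTerm k (w + 1) x (i - 1) * v ^ (i + 1))))) :=
          sum_congr rfl fun i _ => by push_cast; rw [bmvTerm_add_two_add_one k w hx]; ring
      _ = _ := by
        rw [sum_sub_distrib, ← mul_sum, hshift, bmvCoeff, bmvCoeff, mul_sum, mul_sum, mul_sum]
        congr 1
        exact sum_congr rfl fun i _ => by ring
  rw [bmvCoeff, show k + 2 + 1 = k + 1 + 2 from rfl, hpascal, hlow, hhigh]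
  ring

theorem bmvCoeff_zero (w : ℕ) {x : ℝ} (hx : 0 < x + 1) (v : ℝ) :
    bmvCoeff 0 w x v = 1 / risingStepTwo (x + 1) (w + 1) := by
  have h₁ := (risingStepTwo_pos hx (w + 1)).ne'
  have h₂ := (risingStepTwo_pos (by linarith : 0 < x + 1 + 1) w).ne'
  simp only [bmvCoeff, bmvTerm, zero_add, range_one, sum_singleton, Nat.choose_self,
    Nat.cast_one, Nat.cast_zero, sub_zero, pow_zero, mul_one, one_mul,
    ascPochhammer_eval_two_mul_add_one]
  rw [show x + 2 = x + 1 + 1 by ring]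
  field_simp

theorem bmvCoeff_one (w : ℕ) {x : ℝ} (hx : 0 < x + 1) (v : ℝ) :
    bmvCoeff 1 w x v = bmvCoeff 0 w x v + v * bmvCoeff 0 w (x + 1) v := by
  simp only [bmvCoeff, sum_range_succ, range_zero, sum_empty, zero_add, Nat.cast_zero,
    Nat.cast_one, Nat.choose_self, Nat.choose_succ_self_right, bmvTerm_one_zero w hx,
    bmvTerm_one_one w hx]
  ring

-- `k.descFactorial (2 * ℓ) = k! / (k - 2ℓ)!` vanishes for `2ℓ > k`, so the range of summation
-- in `bmvPoly` can be enlarged at will.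
noncomputable def bmvPolyTerm (k w : ℕ) (a b c : ℝ) (ℓ : ℕ) : ℝ :=
  (k.descFactorial (2 * ℓ) : ℝ) / (ℓ ! * (ℓ + w)!)
    * a ^ (k - 2 * ℓ) * b ^ ℓ * c ^ (ℓ + w)

noncomputable def bmvPoly (k w : ℕ) (a b c : ℝ) : ℝ :=
  ∑ ℓ ∈ range (k / 2 + 1), bmvPolyTerm k w a b c ℓ

theorem bmvPoly_eq_sum_range (k w : ℕ) (a b c : ℝ) {N : ℕ} (hN : k / 2 < N) :
    bmvPoly k w a b c = ∑ ℓ ∈ range N, bmvPolyTerm k w a b c ℓ :=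
  (eventually_constant_sum (fun ℓ hℓ => by
    rw [bmvPolyTerm, descFactorial_of_lt (by omega : k < 2 * ℓ)]; simp) hN).symm

theorem bmvPoly_zero (w : ℕ) (a b c : ℝ) : bmvPoly 0 w a b c = c ^ w / w ! := by
  simp [bmvPoly, bmvPolyTerm, div_eq_inv_mul]

theorem bmvPoly_one (w : ℕ) (a b c : ℝ) : bmvPoly 1 w a b c = a * bmvPoly 0 w a b c := by
  simp only [bmvPoly, bmvPolyTerm, Nat.reduceDiv, zero_add, range_one, sum_singleton, mul_zero,
    descFactorial_zero, cast_one, factorial_zero, one_mul, one_div, tsub_zero, pow_one, pow_zero,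
    mul_one]
  ring

theorem bmvPolyTerm_add_two_add_one (k w : ℕ) (a b c : ℝ) (ℓ : ℕ) :
    bmvPolyTerm (k + 2) w a b c (ℓ + 1)
      = a * bmvPolyTerm (k + 1) w a b c (ℓ + 1)
        + 2 * (k + 1) * b * bmvPolyTerm k (w + 1) a b c ℓ := by
  simp only [bmvPolyTerm]
  rw [descFactorial_add_two_two_mul_add_one, show ℓ + (w + 1) = ℓ + 1 + w by ring,
    factorial_succ ℓ]
  rcases lt_or_ge (2 * ℓ) k with h | h
  · obtain ⟨d, rfl⟩ := Nat.exists_eq_add_of_lt h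
    rw [show 2 * ℓ + d + 1 + 2 - 2 * (ℓ + 1) = d + 1 by omega,
      show 2 * ℓ + d + 1 + 1 - 2 * (ℓ + 1) = d by omega,
      show 2 * ℓ + d + 1 - 2 * ℓ = d + 1 by omega]
    push_cast
    field_simp
    ring
  · rw [descFactorial_of_lt (by omega : k + 1 < 2 * (ℓ + 1)),
      show k + 2 - 2 * (ℓ + 1) = k - 2 * ℓ by omega]
    push_cast
    field_simp
    ring

theorem bmvPoly_add_two (k w : ℕ) (a b c : ℝ) :
    bmvPoly (k + 2) w a b c
      = a * bmvPoly (k + 1) w a b c + 2 * (k + 1) * b * bmvPoly k (w + 1) a b c := by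
  rw [bmvPoly_eq_sum_range (k + 2) w a b c (by omega : (k + 2) / 2 < k + 3),
    bmvPoly_eq_sum_range (k + 1) w a b c (by omega : (k + 1) / 2 < k + 3),
    bmvPoly_eq_sum_range k (w + 1) a b c (by omega : k / 2 < k + 2),
    sum_range_succ', sum_range_succ' _ (k + 2), mul_add, mul_sum, mul_sum]
  simp only [bmvPolyTerm_add_two_add_one, sum_add_distrib]
  simp only [bmvPolyTerm, mul_zero, descFactorial_zero, cast_one, factorial_zero, zero_add,
    one_mul, one_div, tsub_zero, pow_zero, mul_one]
  ring

noncomputable def bmvDensity (k w : ℕ) (v s : ℝ) : ℝ :=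
  bmvPoly k w (1 + s * v) ((1 - v ^ 2) / 2) ((1 - s ^ 2) / 2)

theorem continuous_bmvDensity (k w : ℕ) (v : ℝ) : Continuous (bmvDensity k w v) := by
  unfold bmvDensity bmvPoly bmvPolyTerm
  fun_prop

theorem intervalIntegrable_bmvDensity_mul_pow (k w : ℕ) (v : ℝ) (m : ℕ) :
    IntervalIntegrable (fun s => bmvDensity k w v s * s ^ m) volume 0 1 :=
  ((continuous_bmvDensity k w v).mul (continuous_pow m)).intervalIntegrable 0 1

noncomputable def bmvMoment (k w : ℕ) (v : ℝ) (m : ℕ) : ℝ :=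
  ∫ s in (0 : ℝ)..1, bmvDensity k w v s * s ^ m

theorem bmvMoment_zero (w : ℕ) (v : ℝ) (m : ℕ) :
    bmvMoment 0 w v m = 1 / risingStepTwo (m + 1) (w + 1) := by
  have hw : (2 : ℝ) ^ w * w ! ≠ 0 := by positivity
  have hN := (risingStepTwo_pos (by positivity : (0 : ℝ) < m + 1) (w + 1)).ne'
  simp only [bmvMoment, bmvDensity, bmvPoly_zero, div_pow]
  rw [intervalIntegral.integral_congr
      (g := fun s => (1 / (2 ^ w * w !)) * (s ^ m * (1 - s ^ 2) ^ w)) fun s _ => by ring,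
    intervalIntegral.integral_const_mul, integral_pow_mul_one_sub_sq_pow]
  field_simp

theorem bmvMoment_one (w : ℕ) (v : ℝ) (m : ℕ) :
    bmvMoment 1 w v m = bmvMoment 0 w v m + v * bmvMoment 0 w v (m + 1) := by
  simp only [bmvMoment]
  rw [← intervalIntegral.integral_const_mul, ← intervalIntegral.integral_add
    (intervalIntegrable_bmvDensity_mul_pow 0 w v m)
    ((intervalIntegrable_bmvDensity_mul_pow 0 w v (m + 1)).const_mul v)]
  refine intervalIntegral.integral_congr fun s _ => ?_
  simp only [bmvDensity, bmvPoly_one]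
  ring

theorem bmvMoment_add_two (k w : ℕ) (v : ℝ) (m : ℕ) :
    bmvMoment (k + 2) w v m = bmvMoment (k + 1) w v m + v * bmvMoment (k + 1) w v (m + 1)
      + (k + 1) * (1 - v ^ 2) * bmvMoment k (w + 1) v m := by
  simp only [bmvMoment]
  rw [← intervalIntegral.integral_const_mul, ← intervalIntegral.integral_const_mul,
    ← intervalIntegral.integral_add (intervalIntegrable_bmvDensity_mul_pow (k + 1) w v m)
      ((intervalIntegrable_bmvDensity_mul_pow (k + 1) w v (m + 1)).const_mul v),
    ← intervalIntegral.integral_add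
      (((intervalIntegrable_bmvDensity_mul_pow (k + 1) w v m).add
      ((intervalIntegrable_bmvDensity_mul_pow (k + 1) w v (m + 1)).const_mul v)))
      ((intervalIntegrable_bmvDensity_mul_pow k (w + 1) v m).const_mul _)]
  refine intervalIntegral.integral_congr fun s _ => ?_
  simp only [bmvDensity, bmvPoly_add_two]
  ring

theorem bmvCoeff_eq_bmvMoment (k w m : ℕ) (v : ℝ) : bmvCoeff k w m v = bmvMoment k w v m := by
  induction k using Nat.twoStepInduction generalizing w m with
  | zero => rw [bmvCoeff_zero w (cast_add_one_pos m), bmvMoment_zero]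
  | one =>
    rw [bmvCoeff_one w (cast_add_one_pos m), bmvMoment_one, bmvCoeff_zero w (cast_add_one_pos m),
      bmvMoment_zero, bmvCoeff_zero w (by positivity), bmvMoment_zero]
    push_cast
    ring
  | more k ih₀ ih₁ =>
    rw [bmvCoeff_add_two k w (cast_add_one_pos m), bmvMoment_add_two, ih₀, ih₁,
      ← Nat.cast_add_one, ih₁]

theorem bmvA_eq_tsum (k w : ℕ) (v ξ : ℝ) :
    bmvA k (w + 1) v ξ = ∑' m : ℕ, bmvCoeff k w m v * ξ ^ m / m ! := by
  rw [bmvA, show k + (w + 1) - 1 = k + w by omega,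
    show k + 2 * (w + 1) - 1 = k + 2 * w + 1 by omega]
  refine tsum_congr fun m => ?_
  rw [bmvCoeff, sum_mul, sum_div]
  refine sum_congr rfl fun j _ => ?_
  rw [bmvTerm, risingStepTwo]
  ring

theorem sum_range_factorial_eq_bmvPoly (k w : ℕ) (a b c : ℝ) :
    ∑ ℓ ∈ range (k / 2 + 1), (k ! : ℝ) / (ℓ ! * (ℓ + w)! * (k - 2 * ℓ)!)
        * a ^ (k - 2 * ℓ) * b ^ ℓ * c ^ (ℓ + w) = bmvPoly k w a b c := by
  refine sum_congr rfl fun ℓ hℓ => ?_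
  rw [bmvPolyTerm]
  have h := factorial_mul_descFactorial (by have := mem_range.mp hℓ; omega : 2 * ℓ ≤ k)
  rw [← h]
  push_cast
  field_simp

theorem bmvA_integral_repr_general (k r : ℕ) (hr : 1 ≤ r) (v ξ : ℝ) :
    bmvA k r v ξ =
      ∫ s in (0:ℝ)..1,
        (∑ ℓ ∈ Finset.range (k / 2 + 1),
          (Nat.factorial k : ℝ) /
              ((Nat.factorial ℓ : ℝ) * (Nat.factorial (ℓ + r - 1) : ℝ) *
                (Nat.factorial (k - 2 * ℓ) : ℝ)) *
            (1 + s * v) ^ (k - 2 * ℓ) * ((1 - v ^ 2) / 2) ^ ℓ *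
            ((1 - s ^ 2) / 2) ^ (ℓ + r - 1)) *
          Real.exp (s * ξ) := by
  obtain ⟨w, rfl⟩ : ∃ w, r = w + 1 := ⟨r - 1, by omega⟩
  simp only [Nat.add_sub_cancel, ← add_assoc, sum_range_factorial_eq_bmvPoly]
  rw [bmvA_eq_tsum]
  simp only [bmvCoeff_eq_bmvMoment, bmvMoment]
  exact (hasSum_integral_mul_pow_mul_div_factorial
    ((continuous_bmvDensity k w v).intervalIntegrable 0 1) ξ).tsum_eq

theorem bmvA_integral_repr (k r : ℕ) (hk : 1 ≤ k) (hr : 1 ≤ r) (v ξ : ℝ) :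
    bmvA k r v ξ =
      ∫ s in (0:ℝ)..1,
        (∑ ℓ ∈ Finset.range (k / 2 + 1),
          (Nat.factorial k : ℝ) /
              ((Nat.factorial ℓ : ℝ) * (Nat.factorial (ℓ + r - 1) : ℝ) *
                (Nat.factorial (k - 2 * ℓ) : ℝ)) *
            (1 + s * v) ^ (k - 2 * ℓ) * ((1 - v ^ 2) / 2) ^ ℓ *
            ((1 - s ^ 2) / 2) ^ (ℓ + r - 1)) *
          Real.exp (s * ξ) :=
  bmvA_integral_repr_general k r hr v ξ
end
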